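/- arXiv:2103.07744 — 3 statements merged into one kernel-verified Lean document; each statement's English description precedes it below -/
import Mathlib

section
/- For D ≥ 1 defined as D = sqrt(((γ_u+1)(γ_v+1))/((γ_u-1)(γ_v-1))) with γ_u, γ_v > 1, the function δ(φ) defined on (0, π) by tan(δ/2) = sin φ / (cos φ + D) (taking the branch with δ ∈ (0, π)) attains its unique maximum at φ* = arccos(-1/D). -/
open Real Set

/-- The Wigner rotation angle as a function of the boosting angle `φ` and the
speed parameter `D`, on the branch `δ ∈ (0, π)` (valid since `D > 1` makes
`cos φ + D > 0`). -/
noncomputable def wignerAngle (D φ : ℝ) : ℝ := 2 * Real.arctan (Real.sin φ / (Real.cos φ + D))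

lemma gamma_gt_one (u : ℝ) (hu : u ∈ Ioo (0:ℝ) 1) : 1 < 1 / Real.sqrt (1 - u^2) := by
  obtain ⟨h0, h1⟩ := hu
  have hpos : 0 < 1 - u^2 := by nlinarith
  have hs : 0 < Real.sqrt (1 - u^2) := Real.sqrt_pos.mpr hpos
  have hlt : Real.sqrt (1 - u^2) < 1 := by
    have := Real.sqrt_lt_sqrt hpos.le (show 1 - u^2 < 1 by nlinarith)
    simpa using this
  exact one_lt_one_div hs hlt

lemma key_ineq (D : ℝ) (hD : 1 < D) (φ : ℝ) (hφ : φ ∈ Ioo (0:ℝ) π)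
    (hc : Real.cos φ ≠ -(1/D)) :
    Real.sqrt (D^2 - 1) * Real.sin φ < Real.cos φ + D := by
  set a := Real.sqrt (D^2 - 1) with ha
  have ha2 : a^2 = D^2 - 1 := Real.sq_sqrt (by nlinarith)
  have ha0 : 0 ≤ a := Real.sqrt_nonneg _
  have hs : 0 < Real.sin φ := Real.sin_pos_of_pos_of_lt_pi hφ.1 hφ.2
  have hsc : Real.sin φ ^ 2 = 1 - Real.cos φ ^ 2 := by
    have := Real.sin_sq_add_cos_sq φ; nlinarith
  have hcD : 0 < Real.cos φ + D := by
    have := Real.neg_one_le_cos φ; linarith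
  have hne : D * Real.cos φ + 1 ≠ 0 := by
    intro h
    apply hc
    have hD0 : D ≠ 0 := by linarith
    field_simp
    linarith
  have hsq : 0 < (D * Real.cos φ + 1)^2 := by positivity
  nlinarith [mul_pos (add_pos_of_pos_of_nonneg hcD (mul_nonneg ha0 hs.le))
      (sub_pos.mpr (show a * Real.sin φ < Real.cos φ + D from by nlinarith))]

theorem stmt_0 (u v : ℝ) (hu : u ∈ Ioo (0:ℝ) 1) (hv : v ∈ Ioo (0:ℝ) 1)
    (γu γv D : ℝ)
    (hγu : γu = 1 / Real.sqrt (1 - u^2)) (hγv : γv = 1 / Real.sqrt (1 - v^2))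
    (hD : D = Real.sqrt (((γu + 1) * (γv + 1)) / ((γu - 1) * (γv - 1)))) :
    ∀ φ ∈ Ioo (0:ℝ) π, φ ≠ Real.arccos (-(1/D)) →
      wignerAngle D φ < wignerAngle D (Real.arccos (-(1/D))) := by
  have hγu1 : 1 < γu := hγu ▸ gamma_gt_one u hu
  have hγv1 : 1 < γv := hγv ▸ gamma_gt_one v hv
  have hr : 1 < ((γu + 1) * (γv + 1)) / ((γu - 1) * (γv - 1)) := by
    rw [lt_div_iff₀ (by nlinarith)]
    nlinarith
  have hD1 : 1 < D := by
    have := Real.sqrt_lt_sqrt (zero_le_one) hr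
    rw [hD]; simpa using this
  have hD0 : 0 < D := by linarith
  set a := Real.sqrt (D^2 - 1) with ha
  have ha2 : a^2 = D^2 - 1 := Real.sq_sqrt (by nlinarith)
  have ha0 : 0 < a := Real.sqrt_pos.mpr (by nlinarith)
  -- values at φ*
  have hc1 : -1 ≤ -(1/D) := by
    rw [neg_le_neg_iff]
    rw [div_le_one hD0]; linarith
  have hc2 : -(1/D) ≤ 1 := by
    have : 0 < 1/D := by positivity
    linarith
  have hcos : Real.cos (Real.arccos (-(1/D))) = -(1/D) := Real.cos_arccos hc1 hc2
  have hsin : Real.sin (Real.arccos (-(1/D))) = a / D := by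
    rw [Real.sin_arccos]
    have h1 : 1 - (-(1/D))^2 = (D^2 - 1) / D^2 := by field_simp
    rw [h1, Real.sqrt_div (by nlinarith), Real.sqrt_sq hD0.le]
  have hval : Real.sin (Real.arccos (-(1/D))) / (Real.cos (Real.arccos (-(1/D))) + D) = 1 / a := by
    rw [hsin, hcos]
    have hden : -(1/D) + D = a^2 / D := by rw [ha2]; field_simp; ring
    rw [hden]
    field_simp
  intro φ hφ hne
  unfold wignerAngle
  have hcD : 0 < Real.cos φ + D := by
    have := Real.neg_one_le_cos φ; linarith
  have hcφ : Real.cos φ ≠ -(1/D) := by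
    intro h
    apply hne
    rw [← h, Real.arccos_cos hφ.1.le hφ.2.le]
  have hkey := key_ineq D hD1 φ hφ hcφ
  have : Real.sin φ / (Real.cos φ + D) < 1 / a := by
    rw [div_lt_div_iff₀ hcD ha0]
    nlinarith
  rw [hval]
  have := Real.arctan_strictMono this
  linarith
end

section
/- The maximal Wigner rotation angle over all boosting angles equals 2·arctan(1/sqrt(D²-1)): for D > 1, sup_{φ ∈ (0,π)} 2·arctan2(sin φ, cos φ + D) = 2·arctan(1/sqrt(D²-1)), attained at φ* = arccos(-1/D). -/
open Real Set

theorem stmt_5 (D : ℝ) (hD : 1 < D) :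
    wignerAngle D (Real.arccos (-(1/D))) = 2 * Real.arctan (1 / Real.sqrt (D^2 - 1)) ∧
    ∀ φ ∈ Ioo (0:ℝ) π, wignerAngle D φ ≤ 2 * Real.arctan (1 / Real.sqrt (D^2 - 1)) := by
  have hD0 : (0:ℝ) < D := lt_trans one_pos hD
  have hD2 : (0:ℝ) < D^2 - 1 := by nlinarith
  set s := Real.sqrt (D^2 - 1) with hs
  have hs0 : 0 < s := Real.sqrt_pos.mpr hD2
  have hs2 : s^2 = D^2 - 1 := Real.sq_sqrt hD2.le
  constructor
  · have h1 : (-(1/D) : ℝ) ∈ Set.Icc (-1:ℝ) 1 := by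
      constructor
      · rw [neg_le_neg_iff]
        rw [div_le_one hD0]; linarith
      · have : (0:ℝ) < 1/D := by positivity
        linarith
    have hcos : Real.cos (Real.arccos (-(1/D))) = -(1/D) :=
      Real.cos_arccos h1.1 h1.2
    have hsin : Real.sin (Real.arccos (-(1/D))) = Real.sqrt (1 - (-(1/D))^2) :=
      by exact Real.sin_arccos _
    unfold wignerAngle
    rw [hcos, hsin]
    congr 1
    have h1d : (1 - (-(1/D))^2) = (D^2 - 1)/D^2 := by field_simp
    have hsq : Real.sqrt (1 - (-(1/D))^2) = s / D := by
      rw [h1d, show (D^2-1)/D^2 = (s/D)^2 from by rw [div_pow, hs2]]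
      exact Real.sqrt_sq (by positivity)
    rw [hsq]
    congr 1
    have : -(1/D) + D = (D^2 - 1)/D := by field_simp; ring
    rw [this]
    rw [div_eq_div_iff (by positivity) hs0.ne']
    field_simp
    nlinarith
  · intro φ hφ
    have hsinφ : 0 < Real.sin φ := Real.sin_pos_of_pos_of_lt_pi hφ.1 hφ.2
    have hcosφ : -1 ≤ Real.cos φ := Real.neg_one_le_cos φ
    have hden : 0 < Real.cos φ + D := by linarith
    unfold wignerAngle
    have key : Real.sin φ * s - Real.cos φ ≤ D := by
      nlinarith [sq_nonneg (Real.sin φ + s * Real.cos φ), Real.sin_sq_add_cos_sq φ,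
        sq_nonneg (Real.sin φ * s - Real.cos φ - D), sq_nonneg (Real.sin φ * s - Real.cos φ + D)]
    have hratio : Real.sin φ / (Real.cos φ + D) ≤ 1 / s := by
      rw [div_le_div_iff₀ hden hs0]
      nlinarith
    have := Real.arctan_strictMono.monotone hratio
    linarith
end

section
/- The two formulas for the Wigner angle agree: if cos δ + 1 = (1 + γ_u + γ_v + γ_u γ_v (1 + u v cos φ))² / ((γ_u+1)(γ_v+1)(γ_u γ_v (1+uv cos φ)+1)) with δ ∈ [0, π), then tan(δ/2) = sin φ/(cos φ + D) with D = sqrt(((γ_u+1)(γ_v+1))/((γ_u-1)(γ_v-1))). -/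
open Real Set

/-! With `r = u v γ_u γ_v`, so that `r² = (γ_u² - 1)(γ_v² - 1)`, and `P = (γ_u + 1)(γ_v + 1)`, the
numerator of the Wigner formula is `N = P + r cos φ`, and its denominator `M` satisfies
`2M - N² = (r sin φ)²`. Hence `tan² (δ/2) = (1 - cos δ)/(1 + cos δ) = (r sin φ / N)²`. Since
`r² = P (γ_u - 1)(γ_v - 1)`, also `D = P / r`, and `r sin φ / N = sin φ / (cos φ + D)`. -/

theorem one_lt_one_div_sqrt_one_sub_sq {u : ℝ} (hu0 : u ≠ 0) (hu : |u| < 1) :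
    1 < 1 / √(1 - u ^ 2) := by
  have hu2 : u ^ 2 < 1 := (sq_lt_one_iff_abs_lt_one u).2 hu
  have hu2' : 0 < u ^ 2 := by positivity
  refine one_lt_one_div (sqrt_pos.2 (by linarith)) ?_
  rw [sqrt_lt' one_pos]
  linarith

theorem sq_mul_one_div_sqrt_one_sub_sq_sq {u : ℝ} (hu : |u| < 1) :
    u ^ 2 * (1 / √(1 - u ^ 2)) ^ 2 = (1 / √(1 - u ^ 2)) ^ 2 - 1 := by
  have hu2 : 0 < 1 - u ^ 2 := sub_pos.2 ((sq_lt_one_iff_abs_lt_one u).2 hu)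
  rw [div_pow, sq_sqrt hu2.le]
  field_simp
  ring

theorem tan_half_eq_of_one_sub_cos_div_one_add_cos_eq_sq {x y : ℝ} (hx : x ∈ Ico 0 π)
    (hy : 0 ≤ y) (h : (1 - cos x) / (1 + cos x) = y ^ 2) : tan (x / 2) = y := by
  obtain ⟨hx0, hxπ⟩ := hx
  have hcos : 0 < cos (x / 2) := cos_pos_of_mem_Ioo ⟨by linarith [pi_pos], by linarith⟩
  have hcos_sq : cos (x / 2) ^ 2 = (1 + cos x) / 2 := by
    rw [cos_sq, mul_div_cancel₀ _ two_ne_zero]; ring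
  have htan_sq : tan (x / 2) ^ 2 = y ^ 2 := by
    rw [← h, tan_eq_sin_div_cos, div_pow, sin_sq, hcos_sq]
    field_simp
    ring
  have htan : 0 ≤ tan (x / 2) := tan_nonneg_of_nonneg_of_le_pi_div_two (by linarith) (by linarith)
  exact (pow_left_inj₀ htan hy two_ne_zero).1 htan_sq

theorem sqrt_div_eq_div_of_sq_eq_mul {p q r : ℝ} (hp : 0 ≤ p) (hr : 0 < r) (h : r ^ 2 = p * q) :
    √(p / q) = p / r := by
  rw [← sqrt_sq (div_nonneg hp hr.le), div_pow, h]
  rcases hp.eq_or_lt with rfl | hp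
  · simp
  · congr 1; field_simp

section WignerAlgebra

variable {a b r c : ℝ}

theorem abs_lt_of_sq_eq_mul_sq_sub_one (ha : 1 < a) (hb : 1 < b)
    (hr : r ^ 2 = (a ^ 2 - 1) * (b ^ 2 - 1)) :
    |r| < (a + 1) * (b + 1) ∧ |r| < a * b + 1 := by
  constructor <;> refine abs_lt_of_sq_lt_sq ?_ (by nlinarith) <;> rw [hr] <;> nlinarith

theorem wigner_numerator_pos (ha : 1 < a) (hb : 1 < b) (hr : r ^ 2 = (a ^ 2 - 1) * (b ^ 2 - 1))
    (hc : |c| ≤ 1) : 0 < (a + 1) * (b + 1) + c * r := by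
  have := neg_abs_le (c * r)
  have := (abs_lt_of_sq_eq_mul_sq_sub_one ha hb hr).1
  rw [abs_mul] at *
  nlinarith [abs_nonneg r]

theorem wigner_denominator_pos (ha : 1 < a) (hb : 1 < b) (hr : r ^ 2 = (a ^ 2 - 1) * (b ^ 2 - 1))
    (hc : |c| ≤ 1) : 0 < a * b + 1 + c * r := by
  have := neg_abs_le (c * r)
  have := (abs_lt_of_sq_eq_mul_sq_sub_one ha hb hr).2
  rw [abs_mul] at *
  nlinarith [abs_nonneg r]

theorem one_sub_div_one_add_eq_of_wigner {s w : ℝ} (ha : 1 < a) (hb : 1 < b)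
    (hr : r ^ 2 = (a ^ 2 - 1) * (b ^ 2 - 1)) (hcs : s ^ 2 + c ^ 2 = 1)
    (hw : 1 + w = ((a + 1) * (b + 1) + c * r) ^ 2 / ((a + 1) * (b + 1) * (a * b + 1 + c * r))) :
    (1 - w) / (1 + w) = (r * s / ((a + 1) * (b + 1) + c * r)) ^ 2 := by
  have hc : |c| ≤ 1 := abs_le_one_iff_mul_self_le_one.2 (by nlinarith)
  have hN := wigner_numerator_pos ha hb hr hc
  have hK := wigner_denominator_pos ha hb hr hc
  rw [show 1 - w = 2 - (1 + w) by ring, hw]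
  field_simp
  linear_combination -hr - r ^ 2 * hcs

end WignerAlgebra

theorem stmt_15 (u v : ℝ) (hu : u ∈ Ioo (0:ℝ) 1) (hv : v ∈ Ioo (0:ℝ) 1)
    (γu γv D φ δ : ℝ)
    (hγu : γu = 1 / Real.sqrt (1 - u^2)) (hγv : γv = 1 / Real.sqrt (1 - v^2))
    (hφ : φ ∈ Ioo (0:ℝ) π)
    (hD : D = Real.sqrt (((γu + 1) * (γv + 1)) / ((γu - 1) * (γv - 1))))
    (hδ : δ ∈ Ico (0:ℝ) π)
    (hWig : 1 + Real.cos δ =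
      (1 + γu + γv + γu * γv * (1 + u * v * Real.cos φ))^2 /
        ((γu + 1) * (γv + 1) * (γu * γv * (1 + u * v * Real.cos φ) + 1))) :
    Real.tan (δ / 2) = Real.sin φ / (Real.cos φ + D) := by
  obtain ⟨hu0, hu1⟩ := hu
  obtain ⟨hv0, hv1⟩ := hv
  have hu : |u| < 1 := abs_lt.2 ⟨by linarith, hu1⟩
  have hv : |v| < 1 := abs_lt.2 ⟨by linarith, hv1⟩
  have ha : 1 < γu := hγu ▸ one_lt_one_div_sqrt_one_sub_sq hu0.ne' hu
  have hb : 1 < γv := hγv ▸ one_lt_one_div_sqrt_one_sub_sq hv0.ne' hv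
  have hua : u ^ 2 * γu ^ 2 = γu ^ 2 - 1 := hγu ▸ sq_mul_one_div_sqrt_one_sub_sq_sq hu
  have hvb : v ^ 2 * γv ^ 2 = γv ^ 2 - 1 := hγv ▸ sq_mul_one_div_sqrt_one_sub_sq_sq hv
  obtain ⟨r, hr_def⟩ : ∃ r, r = u * v * γu * γv := ⟨_, rfl⟩
  have hr : 0 < r := by
    have : 0 < γu := by linarith
    have : 0 < γv := by linarith
    rw [hr_def]; positivity
  have hr2 : r ^ 2 = (γu ^ 2 - 1) * (γv ^ 2 - 1) := by rw [← hua, ← hvb, hr_def]; ring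
  rw [show 1 + γu + γv + γu * γv * (1 + u * v * cos φ) = (γu + 1) * (γv + 1) + cos φ * r by
      rw [hr_def]; ring,
    show γu * γv * (1 + u * v * cos φ) + 1 = γu * γv + 1 + cos φ * r by rw [hr_def]; ring] at hWig
  have hsin : 0 < sin φ := sin_pos_of_pos_of_lt_pi hφ.1 hφ.2
  have hN := wigner_numerator_pos ha hb hr2 (abs_cos_le_one φ)
  rw [tan_half_eq_of_one_sub_cos_div_one_add_cos_eq_sq hδ (by positivity)
      (one_sub_div_one_add_eq_of_wigner ha hb hr2 (sin_sq_add_cos_sq φ) hWig),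
    hD, sqrt_div_eq_div_of_sq_eq_mul (by positivity) hr (by rw [hr2]; ring)]
  field_simp
  ring
end
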